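/- Let m_red > 0 and let V : ℝ³ → [0,∞) be measurable, compactly supported and square-integrable. Let S be the set of smooth functions φ : ℝ³ → ℝ such that φ and ∇φ are square-integrable and ∫ V φ² < ∞, and define the functional E[φ] := ∫_{ℝ³} |∇φ(x)|² dx + 2 m_red ∫_{ℝ³} (1 + φ(x))² V(x) dx on S. If φ₀ ∈ S is a minimizer of E on S (i.e. E[φ₀] ≤ E[φ] for all φ ∈ S), then E[φ₀] = 2 m_red ∫_{ℝ³} V(x) (1 + φ₀(x)) dx. -/

import Mathlib

open Real MeasureTheory

noncomputable section

/-- If the quadratic `α s² + c s` is minimized at `s = 1` with `α ≥ 0`, then `2α + c = 0`. -/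
lemma quad_min_aux (α c : ℝ) (hα : 0 ≤ α)
    (h : ∀ s : ℝ, α + c ≤ α * s ^ 2 + c * s) : 2 * α + c = 0 := by
  have hpos : (0:ℝ) < α + 1 := by linarith
  set t := (2 * α + c) / (2 * (α + 1)) with htdef
  have ht : t * (2 * (α + 1)) = 2 * α + c := by
    rw [htdef]; field_simp
  have h1 := h (1 - t)
  have ht2 : (2 * α + c) * t = 2 * (α + 1) * t ^ 2 := by
    rw [← ht]; ring
  have key : t ^ 2 * (α + 2) ≤ 0 := by nlinarith [h1, ht2]
  have ht0 : t ^ 2 ≤ 0 := by nlinarith [key]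
  have : t ^ 2 = 0 := le_antisymm ht0 (sq_nonneg t)
  have htz : t = 0 := by
    have := pow_eq_zero_iff (n := 2) (by norm_num) |>.mp this
    exact this
  rw [htz] at ht
  linarith

/-- The variational scattering energy functional
`E[φ] = ∫ |∇φ|² + 2 m_red ∫ (1+φ)² V`. -/
def scatEnergy (V : EuclideanSpace ℝ (Fin 3) → ℝ) (mred : ℝ)
    (φ : EuclideanSpace ℝ (Fin 3) → ℝ) : ℝ :=
  (∫ x, ‖fderiv ℝ φ x‖ ^ 2) + 2 * mred * ∫ x, (1 + φ x) ^ 2 * V x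

/-- The admissible class: smooth `φ` with `φ`, `∇φ` square-integrable and `∫ V φ² < ∞`. -/
def scatAdmissible (V : EuclideanSpace ℝ (Fin 3) → ℝ) :
    Set (EuclideanSpace ℝ (Fin 3) → ℝ) :=
  {φ | ContDiff ℝ (⊤ : ℕ∞) φ ∧ Integrable (fun x => φ x ^ 2) ∧
    Integrable (fun x => ‖fderiv ℝ φ x‖ ^ 2) ∧
    Integrable (fun x => V x * φ x ^ 2)}

/-- At a minimizer `φ₀` of the scattering energy functional, the minimum value equals the
first-Born-type expression `2 m_red ∫ V (1 + φ₀)`; this is the identity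
`4πa = 2 m_red ∫ V (1+φ_min)` in the variational definition of the scattering length. -/
theorem scattering_energy_at_minimizer
    (mred : ℝ) (hmred : 0 < mred) (V : EuclideanSpace ℝ (Fin 3) → ℝ)
    (hVmeas : Measurable V) (hVpos : ∀ x, 0 ≤ V x) (hVsupp : HasCompactSupport V)
    (hVL2 : MemLp V 2 volume)
    (φ₀ : EuclideanSpace ℝ (Fin 3) → ℝ) (hφ₀ : φ₀ ∈ scatAdmissible V)
    (hmin : ∀ φ ∈ scatAdmissible V, scatEnergy V mred φ₀ ≤ scatEnergy V mred φ) :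
    scatEnergy V mred φ₀ = 2 * mred * ∫ x, V x * (1 + φ₀ x) := by
  obtain ⟨hsm, hφsq, hdsq, hVφsq⟩ := hφ₀
  have hdiff : Differentiable ℝ φ₀ := hsm.differentiable (by simp)
  set A := ∫ x, ‖fderiv ℝ φ₀ x‖ ^ 2 with hA
  set B0 := ∫ x, V x with hB0
  set B1 := ∫ x, V x * φ₀ x with hB1
  set B2 := ∫ x, V x * φ₀ x ^ 2 with hB2
  -- integrability of V
  have hV1 : Integrable V := by
    rw [← memLp_one_iff_integrable]
    exact hVL2.mono_exponent_of_measure_support_ne_top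
      (fun x hx => image_eq_zero_of_notMem_tsupport hx)
      hVsupp.isCompact.measure_lt_top.ne one_le_two
  -- integrability of V * φ₀
  have hVsq : Integrable (fun x => V x ^ 2) := hVL2.integrable_sq
  have hVφ : Integrable (fun x => V x * φ₀ x) := by
    have hmeas : AEStronglyMeasurable (fun x => V x * φ₀ x) volume :=
      (hVmeas.aestronglyMeasurable.mul hsm.continuous.aestronglyMeasurable)
    have hbound : Integrable (fun x => (1/2) * (V x ^ 2 + φ₀ x ^ 2)) :=
      (hVsq.add hφsq).const_mul (1/2)
    refine Integrable.mono' hbound hmeas ?_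
    filter_upwards with x
    rw [Real.norm_eq_abs, abs_mul]
    nlinarith [sq_nonneg (|V x| - |φ₀ x|), sq_abs (V x), sq_abs (φ₀ x),
      abs_nonneg (V x), abs_nonneg (φ₀ x)]
  -- the scaled functions are admissible
  have adm : ∀ s : ℝ, (fun x => s * φ₀ x) ∈ scatAdmissible V := by
    intro s
    have hd : ∀ x, fderiv ℝ (fun y => s * φ₀ y) x = s • fderiv ℝ φ₀ x := fun x =>
      fderiv_const_mul (hdiff x) s
    refine ⟨contDiff_const.mul hsm, ?_, ?_, ?_⟩
    · refine (hφsq.const_mul (s ^ 2)).congr ?_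
      filter_upwards with x; ring
    · refine (hdsq.const_mul (s ^ 2)).congr ?_
      filter_upwards with x
      rw [hd x, norm_smul]
      simp [mul_pow, sq_abs, mul_comm]
    · refine (hVφsq.const_mul (s ^ 2)).congr ?_
      filter_upwards with x; ring
  -- value of the energy on the scaled functions
  have key : ∀ s : ℝ, scatEnergy V mred (fun x => s * φ₀ x)
      = s ^ 2 * A + 2 * mred * (B0 + 2 * s * B1 + s ^ 2 * B2) := by
    intro s
    have hd : ∀ x, fderiv ℝ (fun y => s * φ₀ y) x = s • fderiv ℝ φ₀ x := fun x =>
      fderiv_const_mul (hdiff x) s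
    have h1 : (∫ x, ‖fderiv ℝ (fun y => s * φ₀ y) x‖ ^ 2) = s ^ 2 * A := by
      rw [hA, ← integral_const_mul]
      refine integral_congr_ae ?_
      filter_upwards with x
      rw [hd x, norm_smul]
      simp [mul_pow, sq_abs]
    have hsum1 : Integrable (fun x => V x + 2 * s * (V x * φ₀ x)) volume :=
      hV1.add (hVφ.const_mul (2 * s))
    have hsum2 : Integrable (fun x => s ^ 2 * (V x * φ₀ x ^ 2)) volume :=
      hVφsq.const_mul (s ^ 2)
    have h2 : (∫ x, (1 + s * φ₀ x) ^ 2 * V x) = B0 + 2 * s * B1 + s ^ 2 * B2 := by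
      have heq : (∫ x, (1 + s * φ₀ x) ^ 2 * V x)
          = ∫ x, (V x + 2 * s * (V x * φ₀ x)) + s ^ 2 * (V x * φ₀ x ^ 2) := by
        refine integral_congr_ae ?_
        filter_upwards with x; ring
      rw [heq, integral_add hsum1 hsum2, integral_add hV1 (hVφ.const_mul (2 * s)),
        integral_const_mul, integral_const_mul]
    rw [scatEnergy, h1, h2]
  have hE0 : scatEnergy V mred φ₀ = A + 2 * mred * (B0 + 2 * B1 + B2) := by
    have hfe : φ₀ = fun x => (1 : ℝ) * φ₀ x := by funext x; ring
    rw [hfe, key 1]; ring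
  -- the quadratic inequality
  have hineq' : ∀ s : ℝ, (A + 2 * mred * B2) + 4 * mred * B1
      ≤ (A + 2 * mred * B2) * s ^ 2 + 4 * mred * B1 * s := by
    intro s
    have h := hmin _ (adm s)
    rw [hE0, key s] at h
    ring_nf at h ⊢
    linarith
  have hαnn : 0 ≤ A + 2 * mred * B2 := by
    have hAnn : 0 ≤ A := integral_nonneg fun x => sq_nonneg _
    have hB2nn : 0 ≤ B2 := integral_nonneg fun x => mul_nonneg (hVpos x) (sq_nonneg _)
    positivity
  have hcz : 2 * (A + 2 * mred * B2) + 4 * mred * B1 = 0 :=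
    quad_min_aux _ _ hαnn hineq'
  have hRHS : (∫ x, V x * (1 + φ₀ x)) = B0 + B1 := by
    have heq : (∫ x, V x * (1 + φ₀ x)) = ∫ x, V x + V x * φ₀ x := by
      refine integral_congr_ae ?_
      filter_upwards with x; ring
    rw [heq, integral_add hV1 hVφ]
  rw [hE0, hRHS]
  linear_combination hcz / 2
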